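/- arXiv:1308.3280 — 5 statements merged into one kernel-verified Lean document; each statement's English description precedes it below -/
import Mathlib

section
/- Let A ∈ R^{n×m} and A' ∈ R^{(n+1)×m} with n + 1 ≤ m, and suppose the first n rows of A' coincide with the rows of A. Let σ₁ ≤ σ₂ ≤ … ≤ σ_n be the singular values of A and β₁ ≤ β₂ ≤ … ≤ β_{n+1} be the singular values of A'. Then the singular values interlace: β₁ ≤ σ₁ ≤ β₂ ≤ σ₂ ≤ … ≤ β_n ≤ σ_n ≤ β_{n+1}. -/
/-!
The squared singular values of `A` and `A'` are the eigenvalues of `A Aᵀ` and `A' A'ᵀ`, and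
`A Aᵀ` is the leading principal `n × n` submatrix of `A' A'ᵀ`; so the claim is Cauchy interlacing
followed by monotonicity of the square root. Interlacing is proved by dimension counting: for
eigenvalues `λ₀ ≤ ⋯ ≤ λ_{N-1}`, the eigenvectors of `λ₀, …, λₖ` span a subspace of dimension
`k + 1` on which the Rayleigh quotient is at most `λₖ`, those of `λₖ, …, λ_{N-1}` one of
dimension `N - k` on which it is at least `λₖ`, and two subspaces whose dimensions add up to
more than the ambient dimension share a nonzero vector. Vectors of the
smaller space are seen in the larger one by appending a zero coordinate, which preserves both
the norm and the Rayleigh quotient of the compressed matrix.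
-/

/-- The singular values of a real `p × q` matrix `M` (`p ≤ q`): the square roots of the
eigenvalues of `M * Mᵀ`, listed in nondecreasing order. -/
noncomputable def singularValues {p q : ℕ} (M : Matrix (Fin p) (Fin q) ℝ) : Fin p → ℝ :=
  fun i =>
    Real.sqrt (((Matrix.isHermitian_mul_conjTranspose_self M).eigenvalues ∘
      Tuple.sort (Matrix.isHermitian_mul_conjTranspose_self M).eigenvalues) i)

open Module Submodule Matrix Finset
open scoped RealInnerProductSpace

theorem le_of_finrank_lt_add_of_forall_mem {E : Type*} [NormedAddCommGroup E] [NormedSpace ℝ E]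
    [FiniteDimensional ℝ E] {U V : Submodule ℝ E}
    (hUV : finrank ℝ E < finrank ℝ U + finrank ℝ V) {f : E → ℝ} {α β : ℝ}
    (hU : ∀ x ∈ U, α * ‖x‖ ^ 2 ≤ f x) (hV : ∀ x ∈ V, f x ≤ β * ‖x‖ ^ 2) : α ≤ β := by
  obtain ⟨x, hxU, hxV, hx⟩ : ∃ x ∈ U, x ∈ V ∧ x ≠ 0 := by
    by_contra! h
    exact hUV.not_ge (finrank_add_finrank_le_of_disjoint (disjoint_def.2 h))
  exact le_of_mul_le_mul_right ((hU x hxU).trans (hV x hxV)) (by positivity)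

section Orthonormal

variable {E ι : Type*} [NormedAddCommGroup E] [InnerProductSpace ℝ E] {v : ι → E}

theorem Orthonormal.finrank_span_range_subtype (hv : Orthonormal ℝ v) (s : Finset ι) :
    finrank ℝ (span ℝ (Set.range fun i : s => v i)) = #s := by
  rw [← Fintype.card_coe s]
  exact finrank_span_eq_card (hv.comp ((↑) : s → ι) Subtype.val_injective).linearIndependent

variable [Fintype ι] {T : E →ₗ[ℝ] E} {μ : ι → ℝ}

theorem Orthonormal.inner_map_sum_self (hv : Orthonormal ℝ v) (hT : ∀ i, T (v i) = μ i • v i)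
    (c : ι → ℝ) : ⟪T (∑ i, c i • v i), (∑ i, c i • v i)⟫ = ∑ i, μ i * c i ^ 2 := by
  simp only [map_sum, map_smul, hT, smul_smul]
  rw [hv.inner_sum]
  simp only [conj_trivial]
  exact Finset.sum_congr rfl fun i _ => by ring

theorem Orthonormal.norm_sum_sq (hv : Orthonormal ℝ v) (c : ι → ℝ) :
    ‖∑ i, c i • v i‖ ^ 2 = ∑ i, c i ^ 2 := by
  rw [← real_inner_self_eq_norm_sq, hv.inner_sum]
  simp only [conj_trivial, sq]

theorem Orthonormal.mul_norm_sq_le_inner_map_self (hv : Orthonormal ℝ v)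
    (hT : ∀ i, T (v i) = μ i • v i) {α : ℝ} (hα : ∀ i, α ≤ μ i) {x : E}
    (hx : x ∈ span ℝ (Set.range v)) : α * ‖x‖ ^ 2 ≤ ⟪T x, x⟫ := by
  obtain ⟨c, rfl⟩ := (mem_span_range_iff_exists_fun ℝ).1 hx
  rw [hv.inner_map_sum_self hT, hv.norm_sum_sq, Finset.mul_sum]
  gcongr with i
  exact hα i

theorem Orthonormal.inner_map_self_le_mul_norm_sq (hv : Orthonormal ℝ v)
    (hT : ∀ i, T (v i) = μ i • v i) {β : ℝ} (hβ : ∀ i, μ i ≤ β) {x : E}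
    (hx : x ∈ span ℝ (Set.range v)) : ⟪T x, x⟫ ≤ β * ‖x‖ ^ 2 := by
  obtain ⟨c, rfl⟩ := (mem_span_range_iff_exists_fun ℝ).1 hx
  rw [hv.inner_map_sum_self hT, hv.norm_sum_sq, Finset.mul_sum]
  gcongr with i
  exact hβ i

end Orthonormal

namespace Matrix.IsHermitian

variable {N : ℕ} {M : Matrix (Fin N) (Fin N) ℝ} (hM : M.IsHermitian)

-- `IsHermitian.eigenvalues` carries no order, hence the sorting.
noncomputable def sortedEigenvalues : Fin N → ℝ :=
  hM.eigenvalues ∘ Tuple.sort hM.eigenvalues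

noncomputable def sortedEigenvectors (k : Fin N) : EuclideanSpace ℝ (Fin N) :=
  hM.eigenvectorBasis (Tuple.sort hM.eigenvalues k)

theorem sortedEigenvalues_monotone : Monotone hM.sortedEigenvalues :=
  Tuple.monotone_sort hM.eigenvalues

theorem orthonormal_sortedEigenvectors : Orthonormal ℝ hM.sortedEigenvectors :=
  hM.eigenvectorBasis.orthonormal.comp _ (Tuple.sort hM.eigenvalues).injective

theorem toEuclideanLin_sortedEigenvectors (k : Fin N) :
    toEuclideanLin M (hM.sortedEigenvectors k) =
      hM.sortedEigenvalues k • hM.sortedEigenvectors k := by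
  ext1
  simp [toLpLin_apply, sortedEigenvectors, sortedEigenvalues, hM.mulVec_eigenvectorBasis]

theorem exists_finrank_eq_sub_forall_sortedEigenvalues_le (k : Fin N) :
    ∃ U : Submodule ℝ (EuclideanSpace ℝ (Fin N)), finrank ℝ U = N - k ∧
      ∀ x ∈ U, hM.sortedEigenvalues k * ‖x‖ ^ 2 ≤ ⟪toEuclideanLin M x, x⟫ := by
  have hv := hM.orthonormal_sortedEigenvectors
  refine ⟨span ℝ (Set.range fun j : Ici k => hM.sortedEigenvectors j), ?_, fun x hx => ?_⟩
  · rw [hv.finrank_span_range_subtype, Fin.card_Ici]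
  · refine (hv.comp _ Subtype.val_injective).mul_norm_sq_le_inner_map_self
      (μ := fun j : Ici k => hM.sortedEigenvalues j)
      (fun j => hM.toEuclideanLin_sortedEigenvectors j) (fun j => ?_) hx
    exact hM.sortedEigenvalues_monotone (mem_Ici.1 j.2)

theorem exists_finrank_eq_succ_forall_le_sortedEigenvalues (k : Fin N) :
    ∃ V : Submodule ℝ (EuclideanSpace ℝ (Fin N)), finrank ℝ V = k + 1 ∧
      ∀ x ∈ V, ⟪toEuclideanLin M x, x⟫ ≤ hM.sortedEigenvalues k * ‖x‖ ^ 2 := by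
  have hv := hM.orthonormal_sortedEigenvectors
  refine ⟨span ℝ (Set.range fun j : Iic k => hM.sortedEigenvectors j), ?_, fun x hx => ?_⟩
  · rw [hv.finrank_span_range_subtype, Fin.card_Iic]
  · refine (hv.comp _ Subtype.val_injective).inner_map_self_le_mul_norm_sq
      (μ := fun j : Iic k => hM.sortedEigenvalues j)
      (fun j => hM.toEuclideanLin_sortedEigenvectors j) (fun j => ?_) hx
    exact hM.sortedEigenvalues_monotone (mem_Iic.1 j.2)

end Matrix.IsHermitian

noncomputable def EuclideanSpace.snocZero (N : ℕ) :
    EuclideanSpace ℝ (Fin N) →ₗᵢ[ℝ] EuclideanSpace ℝ (Fin (N + 1)) where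
  toFun y := WithLp.toLp 2 (Fin.snoc (WithLp.ofLp y) 0)
  map_add' x y := by
    ext i
    refine Fin.lastCases ?_ (fun j => ?_) i <;> simp
  map_smul' a x := by
    ext i
    refine Fin.lastCases ?_ (fun j => ?_) i <;> simp
  norm_map' y := by
    simp [EuclideanSpace.norm_eq, Fin.sum_univ_castSucc]

theorem Matrix.inner_toEuclideanLin_snocZero {N : ℕ} (B : Matrix (Fin (N + 1)) (Fin (N + 1)) ℝ)
    (y : EuclideanSpace ℝ (Fin N)) :
    ⟪toEuclideanLin B (EuclideanSpace.snocZero N y), EuclideanSpace.snocZero N y⟫ =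
      ⟪toEuclideanLin (B.submatrix Fin.castSucc Fin.castSucc) y, y⟫ := by
  simp [EuclideanSpace.snocZero, PiLp.inner_apply, toLpLin_apply, mulVec, dotProduct,
    Fin.sum_univ_castSucc]

theorem Matrix.IsHermitian.sortedEigenvalues_interlace {N : ℕ}
    {B : Matrix (Fin (N + 1)) (Fin (N + 1)) ℝ} (hB : B.IsHermitian)
    {C : Matrix (Fin N) (Fin N) ℝ} (hC : C.IsHermitian)
    (hBC : B.submatrix Fin.castSucc Fin.castSucc = C) (i : Fin N) :
    hB.sortedEigenvalues i.castSucc ≤ hC.sortedEigenvalues i ∧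
      hC.sortedEigenvalues i ≤ hB.sortedEigenvalues i.succ := by
  let ι := (EuclideanSpace.snocZero N).toLinearMap
  have finrank_map (V : Submodule ℝ (EuclideanSpace ℝ (Fin N))) :
      finrank ℝ (V.map ι) = finrank ℝ V :=
    (V.equivMapOfInjective ι (EuclideanSpace.snocZero N).injective).finrank_eq.symm
  have map_forall {P : ℝ → ℝ → Prop} {V : Submodule ℝ (EuclideanSpace ℝ (Fin N))}
      (hV : ∀ y ∈ V, P ⟪toEuclideanLin C y, y⟫ (‖y‖ ^ 2)) :
      ∀ x ∈ V.map ι, P ⟪toEuclideanLin B x, x⟫ (‖x‖ ^ 2) := by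
    rintro _ ⟨y, hy, rfl⟩
    simpa [ι, inner_toEuclideanLin_snocZero, hBC] using hV y hy
  constructor
  · obtain ⟨U, hU, hBU⟩ := hB.exists_finrank_eq_sub_forall_sortedEigenvalues_le i.castSucc
    obtain ⟨V, hV, hCV⟩ := hC.exists_finrank_eq_succ_forall_le_sortedEigenvalues i
    refine le_of_finrank_lt_add_of_forall_mem ?_ hBU (map_forall (P := fun q r => q ≤ _ * r) hCV)
    rw [finrank_euclideanSpace_fin, hU, finrank_map, hV, Fin.val_castSucc]
    omega
  · obtain ⟨U, hU, hCU⟩ := hC.exists_finrank_eq_sub_forall_sortedEigenvalues_le i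
    obtain ⟨V, hV, hBV⟩ := hB.exists_finrank_eq_succ_forall_le_sortedEigenvalues i.succ
    refine le_of_finrank_lt_add_of_forall_mem ?_ (map_forall (P := fun q r => _ * r ≤ q) hCU) hBV
    rw [finrank_euclideanSpace_fin, hV, finrank_map, hU, Fin.val_succ]
    omega

theorem stmt4_general (n m : ℕ)
    (A : Matrix (Fin n) (Fin m) ℝ) (A' : Matrix (Fin (n + 1)) (Fin m) ℝ)
    (hrows : ∀ i : Fin n, A' i.castSucc = A i) :
    ∀ i : Fin n, singularValues A' i.castSucc ≤ singularValues A i ∧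
      singularValues A i ≤ singularValues A' i.succ := by
  intro i
  have hsub : (A' * A'ᴴ).submatrix Fin.castSucc Fin.castSucc = A * Aᴴ := by
    ext a b
    simp [mul_apply, hrows]
  obtain ⟨hlow, hhigh⟩ := (isHermitian_mul_conjTranspose_self A').sortedEigenvalues_interlace
    (isHermitian_mul_conjTranspose_self A) hsub i
  exact ⟨Real.sqrt_le_sqrt hlow, Real.sqrt_le_sqrt hhigh⟩

theorem stmt4 (n m : ℕ) (hnm : n + 1 ≤ m)
    (A : Matrix (Fin n) (Fin m) ℝ) (A' : Matrix (Fin (n + 1)) (Fin m) ℝ)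
    (hrows : ∀ i : Fin n, A' i.castSucc = A i) :
    ∀ i : Fin n, singularValues A' i.castSucc ≤ singularValues A i ∧
      singularValues A i ≤ singularValues A' i.succ :=
  stmt4_general n m A A' hrows
end

section
/- Let p₁, …, p_k ≥ 0 with Σᵢ pᵢ = 1, and let three balls be thrown independently into k bins, each ball landing in bin i with probability pᵢ. For two distinct balls a, b let C_{a,b} be the indicator that balls a and b land in the same bin, and set E := E[C_{a,b}] = Σᵢ pᵢ². Then for any three distinct balls a, b, c: E[(C_{a,b} − E)(C_{a,c} − E)] = Σᵢ pᵢ³ − (Σᵢ pᵢ²)² ≤ (Σᵢ pᵢ²)^{3/2}. -/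
/-!
Conditionally on the bin `x` of ball `a`, the indicators `C_{a,b}` and `C_{a,c}` are independent,
each with mean `p x`; hence the covariance is `∑ x, p x * (p x - E) ^ 2 = ∑ p ^ 3 - E ^ 2`.
The bound drops `E ^ 2` and uses `p i ≤ √E` termwise in `∑ p i ^ 3 = ∑ p i ^ 2 * p i`.
-/

open MeasureTheory Finset

lemma Fin.eq_or_eq_or_eq_of_ne {a b c : Fin 3} (hab : a ≠ b) (hac : a ≠ c) (hbc : b ≠ c)
    (j : Fin 3) : j = a ∨ j = b ∨ j = c := by
  omega

def Fin.threeCoordsEquiv (α : Type*) {a b c : Fin 3} (hab : a ≠ b) (hac : a ≠ c) (hbc : b ≠ c) :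
    (Fin 3 → α) ≃ α × α × α where
  toFun f := (f a, f b, f c)
  invFun t j := if j = a then t.1 else if j = b then t.2.1 else t.2.2
  left_inv f := by
    funext j
    rcases Fin.eq_or_eq_or_eq_of_ne hab hac hbc j with rfl | rfl | rfl <;> simp [*, Ne.symm]
  right_inv t := by simp [hab.symm, hac.symm, hbc.symm]

lemma Fin.prod_univ_three_of_ne {M : Type*} [CommMonoid M] {a b c : Fin 3} (hab : a ≠ b)
    (hac : a ≠ c) (hbc : b ≠ c) (w : Fin 3 → M) : ∏ j, w j = w a * w b * w c := by
  have huniv : (univ : Finset (Fin 3)) = {a, b, c} := by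
    ext j; simpa using Fin.eq_or_eq_or_eq_of_ne hab hac hbc j
  rw [huniv, prod_insert (by simp [hab, hac]), prod_pair hbc, mul_assoc]

lemma Fin.sum_prod_mul_comp_three_coords {α R : Type*} [Fintype α] [CommSemiring R] {a b c : Fin 3}
    (hab : a ≠ b) (hac : a ≠ c) (hbc : b ≠ c) (w : α → R) (Φ : α → α → α → R) :
    ∑ f : Fin 3 → α, (∏ j, w (f j)) * Φ (f a) (f b) (f c)
      = ∑ x, ∑ y, ∑ z, w x * w y * w z * Φ x y z := by
  rw [← (Fin.threeCoordsEquiv α hab hac hbc).symm.sum_comp, Fintype.sum_prod_type]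
  simp only [Fintype.sum_prod_type, Fin.prod_univ_three_of_ne hab hac hbc]
  simp [Fin.threeCoordsEquiv, hab.symm, hac.symm, hbc.symm]

lemma integral_pi_eq_sum {ι α : Type*} [Fintype ι] [DecidableEq ι] [Fintype α] [MeasurableSpace α]
    [MeasurableSingletonClass α] (μ : Measure α) [IsFiniteMeasure μ] (F : (ι → α) → ℝ) :
    ∫ f, F f ∂(Measure.pi fun _ : ι => μ) = ∑ f, (∏ j, μ.real {f j}) * F f := by
  rw [integral_fintype .of_finite]
  simp [measureReal_def, ENNReal.toReal_prod]

lemma sum_pow_three_le_rpow {ι : Type*} (s : Finset ι) (p : ι → ℝ) (hp : ∀ i ∈ s, 0 ≤ p i) :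
    ∑ i ∈ s, p i ^ 3 ≤ (∑ i ∈ s, p i ^ 2) ^ ((3 : ℝ) / 2) := by
  set E := ∑ i ∈ s, p i ^ 2
  have hE : 0 ≤ E := sum_nonneg fun i _ => sq_nonneg (p i)
  have hp_le : ∀ i ∈ s, p i ≤ √E := fun i hi =>
    (Real.le_sqrt (hp i hi) hE).mpr (single_le_sum (fun j _ => sq_nonneg (p j)) hi)
  calc ∑ i ∈ s, p i ^ 3 = ∑ i ∈ s, p i ^ 2 * p i := by simp only [pow_succ]
    _ ≤ ∑ i ∈ s, p i ^ 2 * √E := sum_le_sum fun i hi => by gcongr; exact hp_le i hi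
    _ = E ^ ((3 : ℝ) / 2) := by
      rw [← sum_mul, Real.sqrt_eq_rpow, ← Real.rpow_one_add' hE (by norm_num)]
      norm_num

section ThreeBalls

variable {α : Type*} [Fintype α] [MeasurableSpace α] [MeasurableSingletonClass α]
  (μ : Measure α) [IsFiniteMeasure μ] {a b c : Fin 3}

lemma integral_comp_three_coords (hab : a ≠ b) (hac : a ≠ c) (hbc : b ≠ c)
    (Φ : α → α → α → ℝ) :
    ∫ f, Φ (f a) (f b) (f c) ∂(Measure.pi fun _ : Fin 3 => μ)
      = ∑ x, ∑ y, ∑ z, μ.real {x} * μ.real {y} * μ.real {z} * Φ x y z := by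
  rw [integral_pi_eq_sum]
  exact Fin.sum_prod_mul_comp_three_coords hab hac hbc (fun x => μ.real {x}) Φ

lemma integral_mul_comp_three_coords (hab : a ≠ b) (hac : a ≠ c) (hbc : b ≠ c)
    (g h : α → α → ℝ) :
    ∫ f, g (f a) (f b) * h (f a) (f c) ∂(Measure.pi fun _ : Fin 3 => μ)
      = ∑ x, μ.real {x} * ((∑ y, μ.real {y} * g x y) * ∑ z, μ.real {z} * h x z) := by
  rw [integral_comp_three_coords μ hab hac hbc fun x y z => g x y * h x z]
  simp_rw [sum_mul_sum, mul_sum]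
  exact sum_congr rfl fun x _ => sum_congr rfl fun y _ => sum_congr rfl fun z _ => by ring

end ThreeBalls

theorem stmt13 (k : ℕ) (p : Fin k → ℝ) (hp : ∀ i, 0 ≤ p i) (hsum : ∑ i, p i = 1)
    (μ₁ : Measure (Fin k)) (hμ : IsProbabilityMeasure μ₁)
    (hμp : ∀ i, μ₁ {i} = ENNReal.ofReal (p i))
    (a b c : Fin 3) (hab : a ≠ b) (hac : a ≠ c) (hbc : b ≠ c) :
    (∫ f : Fin 3 → Fin k, (if f a = f b then (1:ℝ) else 0)
        ∂(Measure.pi fun _ : Fin 3 => μ₁) = ∑ i, p i ^ 2) ∧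
    (∫ f : Fin 3 → Fin k,
        ((if f a = f b then (1:ℝ) else 0) - ∑ i, p i ^ 2) *
          ((if f a = f c then (1:ℝ) else 0) - ∑ i, p i ^ 2)
        ∂(Measure.pi fun _ : Fin 3 => μ₁)
      = ∑ i, p i ^ 3 - (∑ i, p i ^ 2) ^ 2) ∧
    ∑ i, p i ^ 3 - (∑ i, p i ^ 2) ^ 2 ≤ (∑ i, p i ^ 2) ^ ((3:ℝ) / 2) := by
  have hreal : ∀ i, μ₁.real {i} = p i := fun i => by
    rw [measureReal_def, hμp, ENNReal.toReal_ofReal (hp i)]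
  set E := ∑ i, p i ^ 2 with hE
  have hC : ∀ x, ∑ y, p y * (if x = y then (1:ℝ) else 0) = p x := by simp
  have hC_sub : ∀ x, ∑ y, p y * ((if x = y then (1:ℝ) else 0) - E) = p x - E := by
    simp [mul_sub, sum_sub_distrib, ← sum_mul, hsum]
  refine ⟨?_, ?_, (sub_le_self _ (sq_nonneg E)).trans
    (sum_pow_three_le_rpow univ p fun i _ => hp i)⟩
  · have h := integral_mul_comp_three_coords μ₁ hab hac hbc
      (fun x y => if x = y then (1:ℝ) else 0) fun _ _ => 1
    simp only [mul_one, hreal, hC, hsum] at h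
    simp [h, hE, sq]
  · rw [integral_mul_comp_three_coords μ₁ hab hac hbc (fun x y => (if x = y then 1 else 0) - E)
      fun x z => (if x = z then 1 else 0) - E]
    simp only [hreal, hC_sub]
    calc ∑ x, p x * ((p x - E) * (p x - E))
        = ∑ x, p x ^ 3 - 2 * E * ∑ x, p x ^ 2 + E ^ 2 * ∑ x, p x := by
          simp only [mul_sum, ← sum_sub_distrib, ← sum_add_distrib]
          exact sum_congr rfl fun x _ => by ring
      _ = ∑ x, p x ^ 3 - E ^ 2 := by rw [← hE, hsum]; ring
end

section
/- Let p₁, …, p_k ≥ 0 with Σᵢ pᵢ = 1, let d ≥ 3 balls be thrown independently into k bins (each ball landing in bin i with probability pᵢ), let C_{i,j} be the indicator that balls i and j land in the same bin, and let C := Σ_{1 ≤ i < j ≤ d} C_{i,j}. If E[C] = (d(d−1)/2)·Σᵢ pᵢ² ≥ 1, then Var[C] ≤ 4·(E[C])^{3/2}. -/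
/-!
Write `C = ∑ Cₓ` over the pairs `x = (i, j)` with `i < j`, and let `S = ∑ₐ pₐ²`, so that
`E[Cₓ] = S` and `E[C] = N S` with `N = d(d-1)/2`. By independence of the balls, `Cₓ` and `C_y`
are uncorrelated when `x` and `y` are disjoint; if they share a ball, `E[Cₓ C_y]` is the
probability that three (or, for `x = y`, two) balls collide, which is at most `∑ₐ pₐ³ ≤ S^{3/2}`
(resp. `S`). Each ball lies in `d - 1` pairs, so `Var[C] ≤ N (S + 2(d-1) S^{3/2})`, and
this is at most `4 (N S)^{3/2}` because `N S ≥ 1` and `2(d-1) ≤ 3 √N`.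
-/

open MeasureTheory ProbabilityTheory Finset

namespace BallsInBins

variable {k d : ℕ}

def pairs (d : ℕ) : Finset (Fin d × Fin d) := {x | x.1 < x.2}

def edge (x : Fin d × Fin d) : Finset (Fin d) := {x.1, x.2}

def sameBin (x : Fin d × Fin d) (f : Fin d → Fin k) : ℝ := if f x.1 = f x.2 then 1 else 0

def collisionProb (μ₁ : Measure (Fin k)) : ℝ := ∑ a, μ₁.real {a} ^ 2

lemma mem_pairs {x : Fin d × Fin d} : x ∈ pairs d ↔ x.1 < x.2 := by simp [pairs]

lemma card_pairs : #(pairs d) = d.choose 2 := by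
  simpa [pairs] using Fintype.card_product_filter_lt (α := Fin d)

lemma sum_sameBin_eq (f : Fin d → Fin k) :
    ∑ x ∈ pairs d, sameBin x f = ∑ i, ∑ j, if i < j ∧ f i = f j then (1 : ℝ) else 0 := by
  rw [pairs, sum_filter, ← univ_product_univ, sum_product]
  simp [sameBin, ite_and]

lemma card_edge {x : Fin d × Fin d} (hx : x ∈ pairs d) : #(edge x) = 2 :=
  card_pair (mem_pairs.1 hx).ne

lemma edge_injOn : Set.InjOn (edge (d := d)) (pairs d) := by
  rintro ⟨a, b⟩ hab ⟨c, e⟩ hce h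
  rw [mem_coe, mem_pairs] at hab hce
  simp only [edge, Finset.ext_iff, mem_insert, mem_singleton] at h
  have := h a; have := h b; have := h c; have := h e
  grind

lemma three_le_card_edge_union {x y : Fin d × Fin d} (hx : x ∈ pairs d) (hy : y ∈ pairs d)
    (hxy : x ≠ y) : 3 ≤ #(edge x ∪ edge y) := by
  have hssub : edge x ⊂ edge x ∪ edge y := by
    refine ssubset_of_subset_of_ne subset_union_left fun h => hxy (edge_injOn hx hy ?_)
    exact (eq_of_subset_of_card_le (h ▸ subset_union_right)
      (by rw [card_edge hx, card_edge hy])).symm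
  have := card_lt_card hssub
  rwa [card_edge hx] at this

lemma card_filter_mem_edge_le (v : Fin d) : #{y ∈ pairs d | v ∈ edge y} ≤ d - 1 := by
  set other : Fin d × Fin d → Fin d := fun y => if y.1 = v then y.2 else y.1
  have hother : ∀ y ∈ pairs d, v ∈ edge y → other y ≠ v ∧ edge y = {v, other y} := by
    intro y hy hv
    rw [mem_pairs] at hy
    simp only [edge, mem_insert, mem_singleton] at hv ⊢
    rcases hv with rfl | rfl
    · simp [other, hy.ne']
    · simp [other, hy.ne, pair_comm]
  calc #{y ∈ pairs d | v ∈ edge y} ≤ #(univ.erase v) := by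
        refine card_le_card_of_injOn other (fun y hy => ?_) (fun y hy y' hy' h => ?_)
        · rw [mem_coe, mem_filter] at hy
          simpa using (hother y hy.1 hy.2).1
        · rw [mem_coe, mem_filter] at hy hy'
          refine edge_injOn hy.1 hy'.1 ?_
          rw [(hother y hy.1 hy.2).2, h, (hother y' hy'.1 hy'.2).2]
    _ = d - 1 := by simp

lemma ite_forall_eq_sum_prod {u : Finset (Fin d)} {v : Fin d} (hv : v ∈ u)
    (f : Fin d → Fin k) :
    (if ∀ l ∈ u, f l = f v then (1 : ℝ) else 0) = ∑ a, ∏ l ∈ u, if f l = a then 1 else 0 := by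
  simp_rw [prod_boole]
  rw [eq_comm, Fintype.sum_eq_single (f v)]
  · congr -- the two sides differ only in their `Decidable` instances
  · exact fun a ha => if_neg fun h => ha (h v hv).symm

lemma sameBin_eq_ite (x : Fin d × Fin d) (f : Fin d → Fin k) :
    sameBin x f = if ∀ l ∈ edge x, f l = f x.1 then 1 else 0 := by
  simp [sameBin, edge, eq_comm]

lemma sameBin_mul_sameBin {x y : Fin d × Fin d} {v : Fin d} (hvx : v ∈ edge x)
    (hvy : v ∈ edge y) (f : Fin d → Fin k) :
    sameBin x f * sameBin y f = if ∀ l ∈ edge x ∪ edge y, f l = f v then 1 else 0 := by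
  simp only [sameBin, edge, mem_union, mem_insert, mem_singleton] at hvx hvy ⊢
  split_ifs <;> grind

lemma sq_two_mul_pred_le (d : ℕ) : (2 * ((d - 1 : ℕ) : ℝ)) ^ 2 ≤ 9 * (d.choose 2 : ℝ) := by
  rcases d with _ | n
  · simp
  · rw [Nat.cast_choose_two]
    push_cast
    simp only [add_tsub_cancel_right]
    nlinarith [sq_nonneg (n : ℝ), n.cast_nonneg (α := ℝ)]

lemma mul_add_le_four_mul_rpow {N S c : ℝ} (hN : 0 ≤ N) (hS : 0 ≤ S) (hm : 1 ≤ N * S)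
    (hcN : c ^ 2 ≤ 9 * N) :
    N * (S + c * (S * √S)) ≤ 4 * (N * S) ^ ((3 : ℝ) / 2) := by
  have hrpow : (N * S) ^ ((3 : ℝ) / 2) = N * S * (√N * √S) := by
    rw [show (3 : ℝ) / 2 = 1 + 1 / 2 by norm_num, Real.rpow_add (by linarith), Real.rpow_one,
      ← Real.sqrt_eq_rpow, Real.sqrt_mul hN]
  have hsqrt_m : 1 ≤ √N * √S := by
    rw [← Real.sqrt_mul hN]
    exact Real.one_le_sqrt.2 hm
  have hc_le : c ≤ 3 * √N := by
    nlinarith [Real.sq_sqrt hN, Real.sqrt_nonneg N]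
  rw [hrpow]
  nlinarith [mul_le_mul_of_nonneg_left hsqrt_m (mul_nonneg hN hS),
    mul_le_mul_of_nonneg_left hc_le (mul_nonneg (mul_nonneg hN hS) (Real.sqrt_nonneg S))]

variable {μ₁ : Measure (Fin k)}

lemma integral_ite_eq (a : Fin k) : ∫ c, (if c = a then (1 : ℝ) else 0) ∂μ₁ = μ₁.real {a} := by
  have : (fun c => if c = a then (1 : ℝ) else 0) = Set.indicator {a} 1 := by
    ext c; simp [Set.indicator_apply]
  rw [this, integral_indicator_one (measurableSet_singleton a)]

lemma collisionProb_nonneg : 0 ≤ collisionProb μ₁ :=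
  sum_nonneg fun _ _ => sq_nonneg _

variable [IsProbabilityMeasure μ₁]

lemma sum_pow_le_mul_sqrt {n : ℕ} (hn : 3 ≤ n) :
    ∑ a, μ₁.real {a} ^ n ≤ collisionProb μ₁ * √(collisionProb μ₁) := by
  rw [collisionProb, sum_mul]
  refine sum_le_sum fun a _ => ?_
  have hle_sqrt : μ₁.real {a} ≤ √(∑ b, μ₁.real {b} ^ 2) := Real.le_sqrt_of_sq_le
    (single_le_sum (f := fun b => μ₁.real {b} ^ 2) (fun b _ => sq_nonneg _) (mem_univ a))
  calc μ₁.real {a} ^ n ≤ μ₁.real {a} ^ 3 :=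
        pow_le_pow_of_le_one measureReal_nonneg measureReal_le_one hn
    _ = μ₁.real {a} ^ 2 * μ₁.real {a} := by ring
    _ ≤ μ₁.real {a} ^ 2 * √(∑ b, μ₁.real {b} ^ 2) := by gcongr

lemma integral_prod_ite_eq (u : Finset (Fin d)) (a : Fin k) :
    ∫ f, ∏ l ∈ u, (if f l = a then (1 : ℝ) else 0) ∂(Measure.pi fun _ : Fin d => μ₁)
      = μ₁.real {a} ^ #u := by
  have hfactor (l : Fin d) : ∫ c, (if l ∈ u then (if c = a then (1 : ℝ) else 0) else 1) ∂μ₁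
      = if l ∈ u then μ₁.real {a} else 1 := by
    split_ifs
    · exact integral_ite_eq a
    · simp
  calc ∫ f, ∏ l ∈ u, (if f l = a then (1 : ℝ) else 0) ∂(Measure.pi fun _ : Fin d => μ₁)
      = ∫ f, ∏ l, (if l ∈ u then (if f l = a then (1 : ℝ) else 0) else 1)
          ∂(Measure.pi fun _ : Fin d => μ₁) := by simp_rw [prod_ite_mem_eq]
    _ = ∏ l : Fin d, if l ∈ u then μ₁.real {a} else 1 := by
      rw [integral_fintype_prod_eq_prod
        (fun l c => if l ∈ u then (if c = a then (1 : ℝ) else 0) else 1)]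
      simp_rw [hfactor]
    _ = μ₁.real {a} ^ #u := by rw [prod_ite_mem_eq, prod_const]

lemma integral_ite_forall_eq {u : Finset (Fin d)} {v : Fin d} (hv : v ∈ u) :
    ∫ f, (if ∀ l ∈ u, f l = f v then (1 : ℝ) else 0) ∂(Measure.pi fun _ : Fin d => μ₁)
      = ∑ a, μ₁.real {a} ^ #u := by
  simp_rw [ite_forall_eq_sum_prod hv]
  rw [integral_finsetSum _ fun _ _ => .of_finite]
  simp_rw [integral_prod_ite_eq]

lemma integral_sameBin {x : Fin d × Fin d} (hx : x ∈ pairs d) :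
    ∫ f, sameBin x f ∂(Measure.pi fun _ : Fin d => μ₁) = collisionProb μ₁ := by
  simp_rw [sameBin_eq_ite]
  rw [integral_ite_forall_eq (by simp [edge]), card_edge hx, collisionProb]

lemma integral_sameBin_mul_sameBin {x y : Fin d × Fin d} {v : Fin d} (hvx : v ∈ edge x)
    (hvy : v ∈ edge y) :
    ∫ f, sameBin x f * sameBin y f ∂(Measure.pi fun _ : Fin d => μ₁)
      = ∑ a, μ₁.real {a} ^ #(edge x ∪ edge y) := by
  simp_rw [sameBin_mul_sameBin hvx hvy]
  exact integral_ite_forall_eq (mem_union_left _ hvx)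

lemma covariance_sameBin_of_disjoint {x y : Fin d × Fin d} (h : Disjoint (edge x) (edge y)) :
    cov[sameBin x, sameBin y; Measure.pi fun _ : Fin d => μ₁] = 0 := by
  have hcoord : iIndepFun (fun l (f : Fin d → Fin k) => f l) (Measure.pi fun _ => μ₁) :=
    iIndepFun_pi (X := fun _ => id) fun _ => aemeasurable_id
  have hne {a b : Fin d} (ha : a ∈ ({x.1, x.2} : Finset _)) (hb : b ∈ ({y.1, y.2} : Finset _)) :
      a ≠ b := h.forall_ne_finset ha hb
  have hpair := hcoord.indepFun_prodMk_prodMk (fun l => measurable_pi_apply l) x.1 x.2 y.1 y.2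
    (hne (by simp) (by simp)) (hne (by simp) (by simp)) (hne (by simp) (by simp))
    (hne (by simp) (by simp))
  exact (hpair.comp (φ := fun c : Fin k × Fin k => if c.1 = c.2 then (1 : ℝ) else 0)
    (ψ := fun c : Fin k × Fin k => if c.1 = c.2 then (1 : ℝ) else 0) .of_discrete .of_discrete
    ).covariance_eq_zero .of_discrete .of_discrete

/-- The second summand is shaped so that summing over `y` counts the pairs through `x.1` and
through `x.2`. -/
lemma covariance_sameBin_le {x y : Fin d × Fin d} (hx : x ∈ pairs d) (hy : y ∈ pairs d) :
    cov[sameBin x, sameBin y; Measure.pi fun _ : Fin d => μ₁]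
      ≤ (if y = x then collisionProb μ₁ else 0) + collisionProb μ₁ * √(collisionProb μ₁) *
        ((if x.1 ∈ edge y then 1 else 0) + (if x.2 ∈ edge y then 1 else 0)) := by
  set S := collisionProb μ₁
  set t : ℝ := (if x.1 ∈ edge y then 1 else 0) + (if x.2 ∈ edge y then 1 else 0)
  have hS : 0 ≤ S := collisionProb_nonneg
  have hS32 : 0 ≤ S * √S := by positivity
  have ht : 0 ≤ t := by positivity
  by_cases hdisj : Disjoint (edge x) (edge y)
  · rw [covariance_sameBin_of_disjoint hdisj]
    exact add_nonneg (by split_ifs <;> simp [hS]) (mul_nonneg hS32 ht)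
  obtain ⟨v, hvx, hvy⟩ := not_disjoint_iff.1 hdisj
  have hcov : cov[sameBin x, sameBin y; Measure.pi fun _ : Fin d => μ₁]
      ≤ ∑ a, μ₁.real {a} ^ #(edge x ∪ edge y) := by
    rw [covariance_eq_sub .of_discrete .of_discrete, integral_sameBin hx, integral_sameBin hy,
      ← integral_sameBin_mul_sameBin hvx hvy]
    exact sub_le_self _ (mul_nonneg hS hS)
  by_cases hyx : y = x
  · subst hyx
    rw [union_self, card_edge hy] at hcov
    rw [if_pos rfl]
    exact hcov.trans (le_add_of_nonneg_right (mul_nonneg hS32 ht))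
  · have ht1 : 1 ≤ t := by
      simp only [edge, mem_insert, mem_singleton] at hvx
      rcases hvx with rfl | rfl
      · simp only [t, if_pos hvy]; exact le_add_of_nonneg_right (by positivity)
      · simp only [t, if_pos hvy]; exact le_add_of_nonneg_left (by positivity)
    have hS32_le := sum_pow_le_mul_sqrt (μ₁ := μ₁) (three_le_card_edge_union hx hy (Ne.symm hyx))
    rw [if_neg hyx]
    nlinarith

lemma sum_covariance_sameBin_le {x : Fin d × Fin d} (hx : x ∈ pairs d) :
    ∑ y ∈ pairs d, cov[sameBin x, sameBin y; Measure.pi fun _ : Fin d => μ₁]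
      ≤ collisionProb μ₁ + 2 * ((d - 1 : ℕ) : ℝ) * (collisionProb μ₁ * √(collisionProb μ₁)) := by
  set S := collisionProb μ₁
  have hS32 : 0 ≤ S * √S := mul_nonneg collisionProb_nonneg (Real.sqrt_nonneg _)
  calc ∑ y ∈ pairs d, cov[sameBin x, sameBin y; Measure.pi fun _ : Fin d => μ₁]
      ≤ ∑ y ∈ pairs d, ((if y = x then S else 0) + S * √S *
          ((if x.1 ∈ edge y then 1 else 0) + (if x.2 ∈ edge y then 1 else 0))) :=
        sum_le_sum fun y hy => covariance_sameBin_le hx hy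
    _ = S + S * √S * (#{y ∈ pairs d | x.1 ∈ edge y} + #{y ∈ pairs d | x.2 ∈ edge y}) := by
        rw [sum_add_distrib, sum_ite_eq' _ _ (fun _ => S), if_pos hx, ← mul_sum, sum_add_distrib,
          sum_boole, sum_boole]
    _ ≤ S + S * √S * (((d - 1 : ℕ) : ℝ) + ((d - 1 : ℕ) : ℝ)) := by
        gcongr <;> exact card_filter_mem_edge_le _
    _ = S + 2 * ((d - 1 : ℕ) : ℝ) * (S * √S) := by ring

lemma integral_sum_sameBin :
    ∫ f, ∑ x ∈ pairs d, sameBin x f ∂(Measure.pi fun _ : Fin d => μ₁)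
      = #(pairs d) * collisionProb μ₁ := by
  rw [integral_finsetSum _ fun _ _ => .of_finite,
    sum_congr rfl fun x hx => integral_sameBin hx, sum_const, nsmul_eq_mul]

lemma integral_sub_sq_sum_sameBin_le :
    ∫ f, (∑ x ∈ pairs d, sameBin x f
        - ∫ g, ∑ x ∈ pairs d, sameBin x g ∂(Measure.pi fun _ : Fin d => μ₁)) ^ 2
        ∂(Measure.pi fun _ : Fin d => μ₁)
      ≤ #(pairs d) * (collisionProb μ₁
          + 2 * ((d - 1 : ℕ) : ℝ) * (collisionProb μ₁ * √(collisionProb μ₁))) := by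
  rw [← variance_eq_integral (Measurable.of_discrete).aemeasurable,
    variance_fun_sum' fun _ _ => .of_discrete, ← nsmul_eq_mul, ← sum_const]
  exact sum_le_sum fun _ hx => sum_covariance_sameBin_le hx

end BallsInBins

open BallsInBins

theorem stmt14_general (k d : ℕ)
    (μ₁ : Measure (Fin k)) (hμ : IsProbabilityMeasure μ₁)
    (C : (Fin d → Fin k) → ℝ)
    (hC : C = fun f => ∑ i : Fin d, ∑ j : Fin d,
      if i < j ∧ f i = f j then (1:ℝ) else 0)
    (hEC : 1 ≤ ∫ f, C f ∂(Measure.pi fun _ : Fin d => μ₁)) :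
    ∫ f, (C f - ∫ g, C g ∂(Measure.pi fun _ : Fin d => μ₁)) ^ 2
        ∂(Measure.pi fun _ : Fin d => μ₁)
      ≤ 4 * (∫ f, C f ∂(Measure.pi fun _ : Fin d => μ₁)) ^ ((3:ℝ) / 2) := by
  obtain rfl : C = fun f => ∑ x ∈ pairs d, sameBin x f :=
    hC.trans (funext fun f => (sum_sameBin_eq f).symm)
  refine integral_sub_sq_sum_sameBin_le.trans ?_
  rw [integral_sum_sameBin] at hEC ⊢
  exact mul_add_le_four_mul_rpow (Nat.cast_nonneg _) collisionProb_nonneg hEC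
    (card_pairs (d := d) ▸ sq_two_mul_pred_le d)

theorem stmt14 (k d : ℕ) (hd : 3 ≤ d) (p : Fin k → ℝ) (hp : ∀ i, 0 ≤ p i)
    (hsum : ∑ i, p i = 1)
    (μ₁ : Measure (Fin k)) (hμ : IsProbabilityMeasure μ₁)
    (hμp : ∀ i, μ₁ {i} = ENNReal.ofReal (p i))
    (C : (Fin d → Fin k) → ℝ)
    (hC : C = fun f => ∑ i : Fin d, ∑ j : Fin d,
      if i < j ∧ f i = f j then (1:ℝ) else 0)
    (hEC : 1 ≤ ∫ f, C f ∂(Measure.pi fun _ : Fin d => μ₁)) :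
    ∫ f, (C f - ∫ g, C g ∂(Measure.pi fun _ : Fin d => μ₁)) ^ 2
        ∂(Measure.pi fun _ : Fin d => μ₁)
      ≤ 4 * (∫ f, C f ∂(Measure.pi fun _ : Fin d => μ₁)) ^ ((3:ℝ) / 2) :=
  stmt14_general k d μ₁ hμ C hC hEC
end

section
/- Let p = (p₁, …, p_m) be a probability vector (pᵢ ≥ 0, Σᵢ pᵢ = 1). Then there exist m probability vectors q^{(1)}, …, q^{(m)} on {1, …, m}, each supported on at most 2 indices, such that p = (1/m) · Σ_{j=1}^{m} q^{(j)}. -/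
/-!
Scale `p` to `w = m • p`, a nonnegative vector with total mass `m` and at most `m` nonzero
entries, and split off probability vectors supported on two points (the columns of an alias
table) one at a time. If `w` has mass `k + 1` on at most `k + 1` nonzero entries, some entry `j`
is at least `1`. If some nonzero entry `i` is at most `1`, the column putting `w i` on `i` and
`1 - w i` on `j` empties entry `i`; otherwise every nonzero entry exceeds `1`, so there are at
most `k` of them, and the point mass at `j` will do. Either way the remainder has mass `k` on at
most `k` nonzero entries.
-/

open Finset

variable {ι : Type*}

theorem single_add_single_le [DecidableEq ι] {w : ι → ℝ} (hw : 0 ≤ w) {i j : ι} {a : ℝ}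
    (ha₀ : 0 ≤ a) (hai : a ≤ w i) (hj : 1 ≤ w j) :
    Pi.single i a + Pi.single j (1 - a) ≤ w := by
  intro t
  rcases eq_or_ne t i with rfl | hti <;> rcases eq_or_ne t j with rfl | htj
  · simp only [Pi.add_apply, Pi.single_eq_same]; linarith
  · simp [htj, hai]
  · simpa [hti] using hj.trans' (sub_le_self 1 ha₀)
  · simpa [hti, htj] using hw t

variable [Fintype ι]

def IsTwoPointDistribution (q : ι → ℝ) : Prop :=
  0 ≤ q ∧ ∑ i, q i = 1 ∧ #{i | q i ≠ 0} ≤ 2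

theorem isTwoPointDistribution_single_add_single [DecidableEq ι] (i j : ι) {a : ℝ}
    (ha₀ : 0 ≤ a) (ha₁ : a ≤ 1) :
    IsTwoPointDistribution (Pi.single i a + Pi.single j (1 - a)) := by
  refine ⟨add_nonneg (Pi.single_nonneg.2 ha₀) (Pi.single_nonneg.2 (sub_nonneg.2 ha₁)),
    by simp [sum_add_distrib], ?_⟩
  calc #{t | (Pi.single i a + Pi.single j (1 - a) : ι → ℝ) t ≠ 0}
      ≤ #{i, j} := card_le_card fun t => by
        by_cases hti : t = i <;> by_cases htj : t = j <;> simp [hti, htj]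
    _ ≤ 2 := card_le_two

theorem filter_sub_ne_zero_subset {w q : ι → ℝ} (hq : 0 ≤ q) (hqw : q ≤ w) :
    ({t | w t - q t ≠ 0} : Finset ι) ⊆ ({t | w t ≠ 0} : Finset ι) := by
  intro t
  simp only [mem_filter, mem_univ, true_and, not_imp_not]
  intro hwt
  have hqt : q t = 0 := le_antisymm (hwt ▸ hqw t) (hq t)
  rw [hwt, hqt, sub_zero]

theorem exists_isTwoPointDistribution_le {k : ℕ} {w : ι → ℝ} (hw : 0 ≤ w)
    (hsum : ∑ i, w i = k + 1) (hcard : #{i | w i ≠ 0} ≤ k + 1) :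
    ∃ q, IsTwoPointDistribution q ∧ q ≤ w ∧ #{i | w i - q i ≠ 0} ≤ k := by
  classical
  set S : Finset ι := {i | w i ≠ 0}
  have hsumS : ∑ i ∈ S, w i = k + 1 := by rw [sum_filter_ne_zero, hsum]
  have hS : S.Nonempty := nonempty_of_sum_ne_zero (by rw [hsumS]; positivity)
  obtain ⟨j, hjS, hj⟩ : ∃ j ∈ S, 1 ≤ w j :=
    exists_le_of_sum_le hS (by rw [hsumS, sum_const, nsmul_one]; exact_mod_cast hcard)
  by_cases hsmall : ∃ i ∈ S, w i ≤ 1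
  · obtain ⟨i, hiS, hi⟩ := hsmall
    set q : ι → ℝ := Pi.single i (w i) + Pi.single j (1 - w i)
    have hq : IsTwoPointDistribution q := isTwoPointDistribution_single_add_single i j (hw i) hi
    have hqw : q ≤ w := single_add_single_le hw (hw i) le_rfl hj
    have hemptied : w i - q i = 0 := by
      rcases eq_or_ne i j with rfl | hij
      · simp only [q, Pi.add_apply, Pi.single_eq_same]; linarith
      · simp [q, hij]
    have herase : ({t | w t - q t ≠ 0} : Finset ι) ⊆ S.erase i := fun t ht =>
      mem_erase.2 ⟨by rintro rfl; exact (mem_filter.1 ht).2 hemptied,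
        filter_sub_ne_zero_subset hq.1 hqw ht⟩
    refine ⟨q, hq, hqw, (card_le_card herase).trans ?_⟩
    rw [card_erase_of_mem hiS]
    omega
  · push Not at hsmall
    have hqw := single_add_single_le hw le_rfl (hw j) hj
    have hq := isTwoPointDistribution_single_add_single j j le_rfl zero_le_one
    refine ⟨_, hq, hqw, (card_le_card (filter_sub_ne_zero_subset hq.1 hqw)).trans ?_⟩
    have hS_lt : (#S : ℝ) < k + 1 := by
      rw [← hsumS, card_eq_sum_ones, Nat.cast_sum, Nat.cast_one]
      exact sum_lt_sum_of_nonempty hS hsmall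
    exact Nat.lt_succ_iff.1 (by exact_mod_cast hS_lt)

theorem exists_isTwoPointDistribution_sum_eq (k : ℕ) {w : ι → ℝ} (hw : 0 ≤ w)
    (hsum : ∑ i, w i = k) (hcard : #{i | w i ≠ 0} ≤ k) :
    ∃ q : Fin k → ι → ℝ, (∀ j, IsTwoPointDistribution (q j)) ∧ ∑ j, q j = w := by
  induction k generalizing w with
  | zero =>
    refine ⟨Fin.elim0, Fin.rec0, ?_⟩
    rw [univ_eq_empty, sum_empty, eq_comm]
    exact (Fintype.sum_eq_zero_iff_of_nonneg hw).1 (by exact_mod_cast hsum)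
  | succ k ih =>
    obtain ⟨q, hq, hqw, hcard'⟩ :=
      exists_isTwoPointDistribution_le hw (by exact_mod_cast hsum) hcard
    obtain ⟨q', hq', hsum'⟩ := ih (w := w - q) (sub_nonneg.2 hqw)
      (by simp only [Pi.sub_apply, sum_sub_distrib, hsum, hq.2.1]; push_cast; ring) hcard'
    refine ⟨Fin.cons q q', Fin.cases hq hq', ?_⟩
    rw [Fin.sum_univ_succ, Fin.cons_zero]
    simp only [Fin.cons_succ, hsum', add_sub_cancel]

theorem stmt15 (m : ℕ) (p : Fin m → ℝ) (hp : ∀ i, 0 ≤ p i) (hsum : ∑ i, p i = 1) :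
    ∃ q : Fin m → Fin m → ℝ,
      (∀ j, (∀ i, 0 ≤ q j i) ∧ (∑ i, q j i = 1) ∧
        (Finset.univ.filter fun i => q j i ≠ 0).card ≤ 2) ∧
      ∀ i, p i = (1 / (m : ℝ)) * ∑ j, q j i := by
  obtain ⟨q, hq, hqp⟩ := exists_isTwoPointDistribution_sum_eq m (w := fun i => m * p i)
    (fun i => mul_nonneg m.cast_nonneg (hp i)) (by rw [← mul_sum, hsum, mul_one])
    ((card_filter_le _ _).trans (by simp))
  refine ⟨q, hq, fun i => ?_⟩
  have hm : (m : ℝ) ≠ 0 := Nat.cast_ne_zero.2 i.pos.ne'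
  rw [← Finset.sum_apply, hqp]
  field_simp
end

section
/- Let ε ∈ (0, 1), A ∈ R^{n×d}, b ∈ R^n, and let W ⊆ R^n be the linear subspace spanned by b together with the columns of A. Suppose Π ∈ R^{m×n} is a subspace embedding for W with parameter ε, i.e., (1−ε)‖x‖₂ ≤ ‖Πx‖₂ ≤ (1+ε)‖x‖₂ for all x ∈ W. Let x* minimize ‖Ax − b‖₂ over x ∈ R^d and let x̃ minimize ‖ΠAx − Πb‖₂ over x ∈ R^d. Then ‖Ax̃ − b‖₂ ≤ ((1+ε)/(1−ε)) · ‖Ax* − b‖₂. -/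
open MeasureTheory

/-- The Euclidean (ℓ₂) norm of a vector in `Fin k → ℝ`. -/
noncomputable def l2norm {k : ℕ} (v : Fin k → ℝ) : ℝ := Real.sqrt (∑ i, (v i) ^ 2)

open Matrix

theorem le_div_mul_of_distortion_of_le {α β : Type*} {N : α → ℝ} {M : β → ℝ} {f : α → β}
    {ε : ℝ} (hε : ε < 1) {u v : α} (hu : (1 - ε) * N u ≤ M (f u))
    (hv : M (f v) ≤ (1 + ε) * N v) (huv : M (f u) ≤ M (f v)) :
    N u ≤ (1 + ε) / (1 - ε) * N v := by
  rw [div_mul_eq_mul_div, le_div_iff₀ (sub_pos.mpr hε), mul_comm]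
  linarith

theorem Matrix.mulVec_sub_mem_span_union_range_col {R n d : Type*} [CommRing R] [Fintype d]
    (A : Matrix n d R) (b : n → R) (x : d → R) :
    A *ᵥ x - b ∈ Submodule.span R ({b} ∪ Set.range A.col) := by
  have hAx : A *ᵥ x ∈ Submodule.span R (Set.range A.col) := by
    rw [← range_mulVecLin]
    exact ⟨x, rfl⟩
  exact Submodule.sub_mem _ (Submodule.span_mono Set.subset_union_right hAx)
    (Submodule.subset_span (Or.inl rfl))

theorem stmt18_general (n m d : ℕ) (ε : ℝ) (hε : ε ∈ Set.Ioo (0:ℝ) 1)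
    (A : Matrix (Fin n) (Fin d) ℝ) (b : Fin n → ℝ)
    (W : Submodule ℝ (Fin n → ℝ))
    (hW : W = Submodule.span ℝ ({b} ∪ Set.range fun j : Fin d => fun i : Fin n => A i j))
    (Φ : Matrix (Fin m) (Fin n) ℝ)
    (hΦ : ∀ x ∈ W, (1 - ε) * l2norm x ≤ l2norm (Φ.mulVec x) ∧
        l2norm (Φ.mulVec x) ≤ (1 + ε) * l2norm x)
    (xstar xtilde : Fin d → ℝ)
    (hxtilde : ∀ x : Fin d → ℝ,
      l2norm ((Φ * A).mulVec xtilde - Φ.mulVec b) ≤ l2norm ((Φ * A).mulVec x - Φ.mulVec b)) :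
    l2norm (A.mulVec xtilde - b) ≤ ((1 + ε) / (1 - ε)) * l2norm (A.mulVec xstar - b) := by
  have hres : ∀ x, A *ᵥ x - b ∈ W := fun x => by
    rw [hW]
    exact A.mulVec_sub_mem_span_union_range_col b x
  have hsketch : ∀ x, (Φ * A) *ᵥ x - Φ *ᵥ b = Φ *ᵥ (A *ᵥ x - b) := fun x => by
    rw [mulVec_sub, mulVec_mulVec]
  refine le_div_mul_of_distortion_of_le hε.2 (hΦ _ (hres xtilde)).1 (hΦ _ (hres xstar)).2 ?_
  simpa only [hsketch] using hxtilde xstar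

theorem stmt18 (n m d : ℕ) (ε : ℝ) (hε : ε ∈ Set.Ioo (0:ℝ) 1)
    (A : Matrix (Fin n) (Fin d) ℝ) (b : Fin n → ℝ)
    (W : Submodule ℝ (Fin n → ℝ))
    (hW : W = Submodule.span ℝ ({b} ∪ Set.range fun j : Fin d => fun i : Fin n => A i j))
    (Φ : Matrix (Fin m) (Fin n) ℝ)
    (hΦ : ∀ x ∈ W, (1 - ε) * l2norm x ≤ l2norm (Φ.mulVec x) ∧
        l2norm (Φ.mulVec x) ≤ (1 + ε) * l2norm x)
    (xstar xtilde : Fin d → ℝ)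
    (hxstar : ∀ x : Fin d → ℝ, l2norm (A.mulVec xstar - b) ≤ l2norm (A.mulVec x - b))
    (hxtilde : ∀ x : Fin d → ℝ,
      l2norm ((Φ * A).mulVec xtilde - Φ.mulVec b) ≤ l2norm ((Φ * A).mulVec x - Φ.mulVec b)) :
    l2norm (A.mulVec xtilde - b) ≤ ((1 + ε) / (1 - ε)) * l2norm (A.mulVec xstar - b) :=
  stmt18_general n m d ε hε A b W hW Φ hΦ xstar xtilde hxtilde
end
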